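/- arXiv:2407.16295 — 3 statements merged into one kernel-verified Lean document; each statement's English description precedes it below -/
import Mathlib

section
/- Let p ∈ (1/2, 1) and κ ≥ 1. Let A and M be independent geometric random variables on the nonnegative integers with P(A ≥ i) = P(M ≥ i) = ((1-p)/p)^i, and conditionally on A = l, let B be binomial with parameters (2κ − l, 1 − p), where we only consider l ≤ 2κ. Then P(2A + 2B + M ≥ 2κ − 1) ≤ (2 + 2√(p/(1-p))) · (4p(1-p))^κ. -/
/-- Core consistency-violation bound.  `A` and `M` are geometric on `ℕ` with
`P(· = i) = ((1-p)/p)^i (1-(1-p)/p)`, and conditionally on `A = l` (considering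
only `l ≤ 2κ`), `B` is binomial with parameters `(2κ - l, 1-p)`.  Then
`P(2A + 2B + M ≥ 2κ - 1) ≤ (2 + 2√(p/(1-p)))·(4p(1-p))^κ`. -/
theorem consistency_violation_bound (p : ℝ) (κ : ℕ)
    (hp : p ∈ Set.Ioo (1/2 : ℝ) 1) (hκ : 1 ≤ κ) :
    (∑ l ∈ Finset.range (2*κ + 1), ∑ j ∈ Finset.range (2*κ - l + 1), ∑' k : ℕ,
        (if 2*κ ≤ 2*l + 2*j + k + 1 then
          (((1-p)/p)^l * (1 - (1-p)/p)) *
          (((2*κ - l).choose j : ℝ) * (1-p)^j * p^(2*κ - l - j)) *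
          (((1-p)/p)^k * (1 - (1-p)/p))
        else 0))
      ≤ (2 + 2 * Real.sqrt (p/(1-p))) * (4*p*(1-p))^κ := by
  obtain ⟨hp2, hp1⟩ := hp
  have hp0 : (0:ℝ) < p := by linarith
  have h1p : (0:ℝ) < 1 - p := by linarith
  set q : ℝ := (1-p)/p with hqdef
  have hq0 : 0 < q := div_pos h1p hp0
  have hq1 : q < 1 := by rw [hqdef, div_lt_one hp0]; linarith
  have h1q0 : 0 < 1 - q := by linarith
  have hpq : 1 - p = p * q := by rw [hqdef]; field_simp
  have h1q : 1 - q = (2*p - 1)/p := by rw [hqdef]; field_simp; ring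
  set s : ℝ := Real.sqrt q with hsdef
  have hs0 : 0 < s := Real.sqrt_pos.2 hq0
  have hs1 : s ≤ 1 := by
    rw [hsdef, show (1:ℝ) = Real.sqrt 1 by simp]
    exact Real.sqrt_le_sqrt hq1.le
  have hs2 : s^2 = q := Real.sq_sqrt hq0.le
  -- geometric tail sum
  have tail : ∀ m : ℕ, ∑' k : ℕ, (if m ≤ k then q^k else 0) = q^m / (1 - q) := by
    intro m
    have hsum : Summable (fun k : ℕ => if m ≤ k then q^k else 0) := by
      apply Summable.of_nonneg_of_le _ _ (summable_geometric_of_lt_one hq0.le hq1)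
      · intro k; split <;> positivity
      · intro k; split
        · exact le_rfl
        · positivity
    have h1 : ∑ i ∈ Finset.range m, (if m ≤ i then q^i else 0) = 0 := by
      apply Finset.sum_eq_zero; intro i hi
      rw [if_neg (Nat.not_le.2 (Finset.mem_range.1 hi))]
    have h2 : ∀ i : ℕ, (if m ≤ i + m then q^(i+m) else 0) = q^m * q^i := by
      intro i
      rw [if_pos (Nat.le_add_left m i), pow_add]; ring
    rw [← Summable.sum_add_tsum_nat_add m hsum, h1, zero_add, tsum_congr h2, tsum_mul_left,
      tsum_geometric_of_lt_one hq0.le hq1, div_eq_mul_inv]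
  -- the inner tsum
  have inner : ∀ (C : ℝ) (l j : ℕ),
      (∑' k : ℕ, (if 2*κ ≤ 2*l + 2*j + k + 1 then C * (q^k * (1 - q)) else 0))
      = C * q^(2*κ - (2*l + 2*j + 1)) := by
    intro C l j
    have h1 : ∀ k : ℕ, (if 2*κ ≤ 2*l + 2*j + k + 1 then C * (q^k * (1 - q)) else 0)
        = (C * (1-q)) * (if 2*κ - (2*l + 2*j + 1) ≤ k then q^k else 0) := by
      intro k
      by_cases h : 2*κ ≤ 2*l + 2*j + k + 1
      · rw [if_pos h, if_pos (by omega)]; ring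
      · rw [if_neg h, if_neg (by omega), mul_zero]
    rw [tsum_congr h1, tsum_mul_left, tail]
    field_simp
  -- rewrite the double sum
  have step1 : (∑ l ∈ Finset.range (2*κ + 1), ∑ j ∈ Finset.range (2*κ - l + 1), ∑' k : ℕ,
        (if 2*κ ≤ 2*l + 2*j + k + 1 then
          (q^l * (1 - q)) *
          (((2*κ - l).choose j : ℝ) * (1-p)^j * p^(2*κ - l - j)) *
          (q^k * (1 - q))
        else 0))
      = ∑ l ∈ Finset.range (2*κ + 1), ∑ j ∈ Finset.range (2*κ - l + 1),
          (q^l * (1 - q)) * (((2*κ - l).choose j : ℝ) * (1-p)^j * p^(2*κ - l - j))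
            * q^(2*κ - (2*l + 2*j + 1)) := by
    refine Finset.sum_congr rfl fun l _ => Finset.sum_congr rfl fun j _ => ?_
    exact inner _ l j
  rw [step1]
  -- termwise bound
  have termbound : ∀ l ∈ Finset.range (2*κ + 1), ∀ j ∈ Finset.range (2*κ - l + 1),
      (q^l * (1 - q)) * (((2*κ - l).choose j : ℝ) * (1-p)^j * p^(2*κ - l - j))
        * q^(2*κ - (2*l + 2*j + 1))
      ≤ ((1-q) * ((2*κ - l).choose j : ℝ) * p^(2*κ - l)) * (q^κ * s⁻¹) := by
    intro l hl j hj
    have hjn : j ≤ 2*κ - l := by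
      have := Finset.mem_range.1 hj; omega
    set n := 2*κ - l with hn
    set m := 2*κ - (2*l + 2*j + 1) with hm
    have e1 : (1-p)^j = p^j * q^j := by rw [hpq, mul_pow]
    have e2 : p^(n-j) * p^j = p^n := by rw [← pow_add, Nat.sub_add_cancel hjn]
    have key2 : q^(l+j+m) ≤ q^κ * s⁻¹ := by
      have h2κ : 2*κ ≤ 2*(l+j+m) + 1 := by omega
      have hle : s^(2*(l+j+m)+1) ≤ s^(2*κ) := pow_le_pow_of_le_one hs0.le hs1 h2κ
      have e3 : s^(2*(l+j+m)+1) = q^(l+j+m) * s := by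
        rw [pow_succ, pow_mul, hs2]
      have e4 : s^(2*κ) = q^κ := by rw [pow_mul, hs2]
      rw [e3, e4] at hle
      rw [← div_eq_mul_inv, le_div_iff₀ hs0]
      exact hle
    have e5 : (q^l * (1 - q)) * (((n:ℕ).choose j : ℝ) * (1-p)^j * p^(n - j)) * q^m
        = ((1-q) * ((n:ℕ).choose j : ℝ) * p^n) * q^(l+j+m) := by
      rw [e1, ← e2, pow_add, pow_add]; ring
    rw [e5]
    apply mul_le_mul_of_nonneg_left key2
    exact mul_nonneg (mul_nonneg h1q0.le (Nat.cast_nonneg _)) (by positivity)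
  refine le_trans (Finset.sum_le_sum fun l hl => Finset.sum_le_sum (termbound l hl)) ?_
  -- evaluate the j-sum
  have jsum : ∀ l : ℕ, ∑ j ∈ Finset.range (2*κ - l + 1),
      ((1-q) * ((2*κ - l).choose j : ℝ) * p^(2*κ - l)) * (q^κ * s⁻¹)
      = ((1-q) * (q^κ * s⁻¹)) * (2*p)^(2*κ - l) := by
    intro l
    set n := 2*κ - l with hn
    have : ∑ j ∈ Finset.range (n + 1), ((1-q) * ((n:ℕ).choose j : ℝ) * p^n) * (q^κ * s⁻¹)
        = ((1-q) * p^n * (q^κ * s⁻¹)) * ∑ j ∈ Finset.range (n + 1), ((n:ℕ).choose j : ℝ) := by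
      rw [Finset.mul_sum]; exact Finset.sum_congr rfl fun j _ => by ring
    rw [this]
    have hc : ∑ j ∈ Finset.range (n + 1), ((n:ℕ).choose j : ℝ) = 2^n := by
      rw [← Nat.cast_sum, Nat.sum_range_choose]; push_cast; ring
    rw [hc, mul_pow]; ring
  rw [Finset.sum_congr rfl fun l _ => jsum l, ← Finset.mul_sum]
  -- geometric sum over l
  have reflect : ∑ l ∈ Finset.range (2*κ + 1), (2*p)^(2*κ - l)
      = ∑ i ∈ Finset.range (2*κ + 1), (2*p)^i := by
    rw [← Finset.sum_range_reflect]
    refine Finset.sum_congr rfl fun i hi => ?_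
    congr 1
    have := Finset.mem_range.1 hi; omega
  have h2p1 : (0:ℝ) < 2*p - 1 := by linarith
  have hgeom : ∑ i ∈ Finset.range (2*κ + 1), (2*p)^i ≤ (2*p)^(2*κ+1) / (2*p - 1) := by
    rw [geom_sum_eq (by intro h; linarith : (2*p:ℝ) ≠ 1)]
    apply (div_le_div_iff_of_pos_right h2p1).2
    linarith [pow_nonneg (by linarith : (0:ℝ) ≤ 2*p) (2*κ+1)]
  have hconst : 0 ≤ (1 - q) * (q^κ * s⁻¹) := by positivity
  refine le_trans (mul_le_mul_of_nonneg_left (reflect ▸ hgeom) hconst) ?_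
  -- final algebra
  have hsinv : s⁻¹ = Real.sqrt (p/(1-p)) := by
    rw [hsdef, ← Real.sqrt_inv, hqdef, inv_div]
  have hpow : (4*p*(1-p))^κ = (2*p)^(2*κ) * q^κ := by
    rw [pow_mul, ← mul_pow]
    congr 1
    rw [hpq]; ring
  have final : (1 - q) * (q^κ * s⁻¹) * ((2*p)^(2*κ+1) / (2*p - 1))
      = 2 * Real.sqrt (p/(1-p)) * (4*p*(1-p))^κ := by
    rw [← hsinv, hpow, h1q, pow_succ]
    field_simp
  rw [final]
  have hX : 0 ≤ (4*p*(1-p))^κ := by positivity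
  nlinarith [Real.sqrt_nonneg (p/(1-p)), mul_nonneg (Real.sqrt_nonneg (p/(1-p))) hX]
end

section
/- Fix m ≥ 2, δ ∈ (1/2,1), ρ ∈ (δ,1], and Δ_max ≥ Δ_i > 0. Among all pairs (λ_s, λ_i) with λ_i = γλ_s, γ ≥ 0, satisfying the security constraints (γ+1)λ_s ≤ (1/Δ_i)·log(mρ/(δ(γ+m))) for the given shard and λ_s ≤ (1/Δ_max)·log(ρ/δ) for the slowest shard, the sum λ_s + λ_i is maximized by taking λ_s* = (1/Δ_max)·log(ρ/δ) and γ* the unique solution of (1/(γ*+1))·log(mρ/(δ(γ*+m)))/log(ρ/δ) = Δ_i/Δ_max, and the maximum equals (1/Δ_i)·log(mρ/(δ(γ*+m))). -/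
/-- Optimal mining-rate configuration.  Among pairs `(λ_s, λ_i)` with
`λ_i = γλ_s`, `γ ≥ 0`, satisfying the security constraints
`(γ+1)λ_s ≤ (1/Δᵢ)·log(mρ/(δ(γ+m)))` and `λ_s ≤ (1/Δmax)·log(ρ/δ)`,
the sum `λ_s + λ_i` is maximized at `λ_s* = (1/Δmax)·log(ρ/δ)` and `γ*` the
unique solution of `(1/(γ*+1))·log(mρ/(δ(γ*+m)))/log(ρ/δ) = Δᵢ/Δmax`, with
maximum value `(1/Δᵢ)·log(mρ/(δ(γ*+m)))`. -/
theorem optimal_mining_rates (m δ ρ Δi Δmax γstar : ℝ)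
    (hm : 2 ≤ m) (hδ : δ ∈ Set.Ioo (1/2 : ℝ) 1) (hρ : ρ ∈ Set.Ioc δ 1)
    (hΔi : 0 < Δi) (hΔ : Δi ≤ Δmax) (hγstar : 0 ≤ γstar)
    (heq : (1/(γstar+1)) * (Real.log (m*ρ/(δ*(γstar+m))) / Real.log (ρ/δ)) = Δi/Δmax) :
    (∀ lams γ : ℝ, 0 < lams → 0 ≤ γ →
        (γ+1)*lams ≤ (1/Δi) * Real.log (m*ρ/(δ*(γ+m))) →
        lams ≤ (1/Δmax) * Real.log (ρ/δ) →
        lams + γ*lams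
          ≤ (1/Δmax)*Real.log (ρ/δ) + γstar * ((1/Δmax)*Real.log (ρ/δ)))
    ∧ (1/Δmax)*Real.log (ρ/δ) + γstar * ((1/Δmax)*Real.log (ρ/δ))
        = (1/Δi) * Real.log (m*ρ/(δ*(γstar+m)))
    ∧ (∀ γ' : ℝ, 0 ≤ γ' →
        (1/(γ'+1)) * (Real.log (m*ρ/(δ*(γ'+m))) / Real.log (ρ/δ)) = Δi/Δmax →
        γ' = γstar) := by

  obtain ⟨hδ1, hδ2⟩ := hδ
  obtain ⟨hρ1, hρ2⟩ := hρ
  have hδ0 : (0:ℝ) < δ := by linarith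
  have hρ0 : (0:ℝ) < ρ := lt_trans hδ0 hρ1
  have hΔmax : (0:ℝ) < Δmax := lt_of_lt_of_le hΔi hΔ
  have hL : 0 < Real.log (ρ/δ) := Real.log_pos ((one_lt_div hδ0).2 hρ1)
  have hm0 : (0:ℝ) < m := by linarith
  have harg : ∀ γ:ℝ, 0 ≤ γ → 0 < m*ρ/(δ*(γ+m)) := fun γ hγ =>
    div_pos (mul_pos hm0 hρ0) (mul_pos hδ0 (by linarith))
  have hmono : ∀ a b : ℝ, 0 ≤ a → a < b →
      Real.log (m*ρ/(δ*(b+m))) < Real.log (m*ρ/(δ*(a+m))) := by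
    intro a b ha hab
    apply Real.log_lt_log (harg b (by linarith))
    apply div_lt_div_of_pos_left (mul_pos hm0 hρ0) (mul_pos hδ0 (by linarith))
    nlinarith
  -- extract formula for f(γ) from the defining equation
  have hform : ∀ γ : ℝ, 0 ≤ γ →
      (1/(γ+1)) * (Real.log (m*ρ/(δ*(γ+m))) / Real.log (ρ/δ)) = Δi/Δmax →
      Real.log (m*ρ/(δ*(γ+m))) = (γ+1)*((Δi/Δmax)*Real.log (ρ/δ)) := by
    intro γ hγ h
    have h1 : (γ+1 : ℝ) ≠ 0 := by linarith
    field_simp at h ⊢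
    nlinarith [h, hL]
  have hfstar := hform γstar hγstar heq
  have hcpos : 0 < (Δi/Δmax)*Real.log (ρ/δ) := mul_pos (div_pos hΔi hΔmax) hL
  have key : (1/Δmax)*Real.log (ρ/δ) + γstar * ((1/Δmax)*Real.log (ρ/δ))
      = (1/Δi) * Real.log (m*ρ/(δ*(γstar+m))) := by
    rw [hfstar]
    field_simp
    ring
  refine ⟨?_, key, ?_⟩
  · intro lams γ hlams hγ h1 h2
    have hlm : 0 ≤ (1/Δmax)*Real.log (ρ/δ) := by positivity
    rcases le_or_gt γ γstar with hle | hlt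
    · nlinarith [mul_le_mul_of_nonneg_left h2 (show (0:ℝ) ≤ γ+1 by linarith),
        mul_le_mul_of_nonneg_right (show γ+1 ≤ γstar+1 by linarith) hlm]
    · have hm2 := hmono γstar γ hγstar hlt
      have : (1/Δi) * Real.log (m*ρ/(δ*(γ+m))) ≤ (1/Δi) * Real.log (m*ρ/(δ*(γstar+m))) := by
        apply mul_le_mul_of_nonneg_left (le_of_lt hm2) (by positivity)
      nlinarith [key, h1]
  · intro γ' hγ' h'
    have hf' := hform γ' hγ' h'
    rcases lt_trichotomy γ' γstar with h | h | h
    · have hx := mul_lt_mul_of_pos_right (show γ'+1 < γstar+1 by linarith) hcpos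
      have := hmono γ' γstar hγ' h
      linarith
    · exact h
    · have hx := mul_lt_mul_of_pos_right (show γstar+1 < γ'+1 by linarith) hcpos
      have := hmono γstar γ' hγstar h
      linarith
end

section
/- In the severe execution environment of shard i, if two honest abstract blocks are mined at times t₁ < t₂, then the block mined at t₂ has strictly greater height than the block mined at t₁; consequently all honest abstract blocks occupy distinct heights. -/
/-- Distinct heights in the severe execution environment.  Honest abstract
blocks `b` are mined at time `time b` with height `height b = L (time b) + 1`,
where `L t` is the length of the (common) longest chain in honest view at time
`t`.  Full blocks are delayed exactly `Δ` seconds, during which no honest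
mining occurs; light blocks propagate instantly; no two blocks are mined
simultaneously.  Then later honest blocks have strictly greater height, and all
honest blocks occupy distinct heights. -/
theorem severe_env_distinct_heights {B : Type*}
    (time : B → ℝ) (height : B → ℕ) (full : B → Prop)
    (Δ : ℝ) (hΔ : 0 < Δ) (L : ℝ → ℕ)
    (hmine : ∀ b, height b = L (time b) + 1)
    (hfreeze : ∀ b b', full b → time b < time b' → time b + Δ < time b')
    (hfullvis : ∀ b t, full b → time b + Δ < t → height b ≤ L t)
    (hlightvis : ∀ b t, ¬ full b → time b < t → height b ≤ L t)
    (hdistinct : ∀ b b', b ≠ b' → time b ≠ time b') :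
    (∀ b b', time b < time b' → height b < height b')
    ∧ (∀ b b', b ≠ b' → height b ≠ height b') := by
  have mono : ∀ b b', time b < time b' → height b < height b' := by
    intro b b' hlt
    have hle : height b ≤ L (time b') := by
      by_cases hf : full b
      · exact hfullvis b (time b') hf (hfreeze b b' hf hlt)
      · exact hlightvis b (time b') hf hlt
    calc height b ≤ L (time b') := hle
      _ < L (time b') + 1 := Nat.lt_succ_self _
      _ = height b' := (hmine b').symm
  refine ⟨mono, fun b b' hne => ?_⟩
  rcases lt_trichotomy (time b) (time b') with h | h | h
  · exact (mono b b' h).ne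
  · exact absurd h (hdistinct b b' hne)
  · exact (mono b' b h).ne'
end
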